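/- arXiv:2410.23064 — 6 statements merged into one kernel-verified Lean document; each statement's English description precedes it below -/
import Mathlib

section
/- Let Γ₁,…,Γ_K (K ≥ 1) be d×d complex matrices that are Hermitian, unitary, traceless, and pairwise anticommuting. Let r ≥ 0 and D ≥ K·r + 1, and suppose Uₖ = 2Pₖ − I_D where each Pₖ is a D×D orthogonal projection of rank at most r. Then ‖W_K(U₁,…,U_K)‖ ≥ K + 2√K, where W_K(U₁,…,U_K) := ∑_{k=1}^K ( Γₖ ⊗ (Uₖ ⊗ I_D + I_D ⊗ Uₖ) + I_d ⊗ Uₖ ⊗ Uₖ ). -/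
/-!
The bound is an eigenvalue of `W_K` on a product vector `φ ⊗ v ⊗ v`. Since
`∑ₖ rank Pₖ ≤ K r < D`, the kernels of the `Pₖ` have a common nonzero vector `v`, and
`Uₖ v = -v` for every `k`. The sum `S = ∑ₖ Γₖ` satisfies `S² = K` because the cross terms cancel
in pairs, and `tr S = 0`; hence `-√K` is an eigenvalue of `S`, with eigenvector `φ` say. Each
summand of `W_K` then acts on `φ ⊗ v ⊗ v` as `Γₖ φ ⊗ (-2 v ⊗ v) + φ ⊗ v ⊗ v`, so `φ ⊗ v ⊗ v` is an
eigenvector of `W_K` with eigenvalue `K - 2 (-√K) = K + 2√K`.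
-/

open Matrix
open scoped Matrix.Norms.L2Operator Kronecker

/-- The game operator `W_K(U₁,…,U_K) = ∑ₖ (Γₖ ⊗ (Uₖ ⊗ I_D + I_D ⊗ Uₖ) + I_d ⊗ Uₖ ⊗ Uₖ)`. -/
noncomputable def WK {K d D : ℕ} (Γ : Fin K → Matrix (Fin d) (Fin d) ℂ)
    (U : Fin K → Matrix (Fin D) (Fin D) ℂ) :
    Matrix (Fin d × (Fin D × Fin D)) (Fin d × (Fin D × Fin D)) ℂ :=
  ∑ k, (Γ k ⊗ₖ (U k ⊗ₖ (1 : Matrix (Fin D) (Fin D) ℂ)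
          + (1 : Matrix (Fin D) (Fin D) ℂ) ⊗ₖ U k)
        + (1 : Matrix (Fin d) (Fin d) ℂ) ⊗ₖ (U k ⊗ₖ U k))

open Module in
theorem LinearMap.finrank_le_finrank_biInf_ker_add_sum_finrank_range {K V W ι : Type*}
    [DivisionRing K] [AddCommGroup V] [Module K V] [FiniteDimensional K V]
    [AddCommGroup W] [Module K W] (f : ι → V →ₗ[K] W) (s : Finset ι) :
    finrank K V ≤ finrank K ↥(⨅ i ∈ s, ker (f i)) + ∑ i ∈ s, finrank K (range (f i)) := by
  classical
  induction s using Finset.induction_on with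
  | empty =>
    rw [show (⨅ i ∈ (∅ : Finset ι), ker (f i)) = ⊤ by simp, finrank_top, Finset.sum_empty,
      add_zero]
  | @insert a s ha ih =>
    rw [Finset.iInf_insert, Finset.sum_insert ha]
    have hsup := Submodule.finrank_sup_add_finrank_inf_eq (ker (f a)) (⨅ i ∈ s, ker (f i))
    have hle := Submodule.finrank_le (ker (f a) ⊔ ⨅ i ∈ s, ker (f i))
    have hrank := (f a).finrank_range_add_finrank_ker
    omega

theorem Finset.sum_mul_sum_self_eq_card_of_anticommute {R ι : Type*} [Ring R] (a : ι → R)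
    (hsq : ∀ i, a i * a i = 1) (hanti : ∀ i j, i ≠ j → a i * a j + a j * a i = 0)
    (s : Finset ι) : (∑ i ∈ s, a i) * (∑ i ∈ s, a i) = s.card := by
  classical
  induction s using Finset.induction_on with
  | empty => simp
  | @insert b s hb ih =>
    have hcross : a b * ∑ i ∈ s, a i + (∑ i ∈ s, a i) * a b = 0 := by
      rw [Finset.mul_sum, Finset.sum_mul, ← Finset.sum_add_distrib]
      exact Finset.sum_eq_zero fun i hi => hanti b i (ne_of_mem_of_not_mem hi hb).symm
    rw [Finset.sum_insert hb, Finset.card_insert_of_notMem hb, Nat.cast_succ, add_mul, mul_add,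
      mul_add, hsq, ih, add_assoc, ← add_assoc (a b * _), hcross, zero_add, add_comm]

namespace Matrix

variable {R ι l m n p : Type*}

theorem exists_ne_zero_forall_mulVec_eq_zero [Field R] [Fintype n] [Fintype ι]
    (A : ι → Matrix m n R) (h : ∑ i, (A i).rank < Fintype.card n) :
    ∃ v ≠ 0, ∀ i, A i *ᵥ v = 0 := by
  have hdim := LinearMap.finrank_le_finrank_biInf_ker_add_sum_finrank_range
    (fun i => (A i).mulVecLin) Finset.univ
  rw [Module.finrank_fintype_fun_eq_card] at hdim
  have hpos : 0 < Module.finrank R ↥(⨅ i ∈ Finset.univ, LinearMap.ker (A i).mulVecLin) := by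
    unfold Matrix.rank at h
    omega
  obtain ⟨v, hv, hne⟩ :=
    Submodule.exists_mem_ne_zero_of_ne_bot (Submodule.one_le_finrank_iff.mp hpos)
  simp only [Finset.mem_univ, iInf_pos, Submodule.mem_iInf, LinearMap.mem_ker,
    mulVecLin_apply] at hv
  exact ⟨v, hne, hv⟩

/-- If `A² = s²` then `(A + s)(A - s) = 0`, so every nonzero vector in the range of `A - s` is an
eigenvector for `-s`; the range is trivial only when `A = s`, and then `tr A = 0` forces `s = 0`. -/
theorem exists_mulVec_eq_neg_smul_of_mul_self_eq [Field R] [CharZero R] [Fintype n]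
    [DecidableEq n] [Nonempty n] (A : Matrix n n R) (s : R) (hsq : A * A = (s * s) • 1)
    (htr : A.trace = 0) : ∃ x ≠ 0, A *ᵥ x = -s • x := by
  by_cases hA : A = s • 1
  · have hs : s = 0 := by simpa [hA, Fintype.card_ne_zero] using htr
    exact ⟨fun _ => 1, fun h => one_ne_zero (congrFun h (Classical.arbitrary n)), by
      simp [hA, hs]⟩
  · obtain ⟨y, hy⟩ : ∃ y, (A - s • 1) *ᵥ y ≠ 0 := by
      by_contra! h
      exact hA (sub_eq_zero.mp (ext_iff_mulVec.mpr fun y => by simpa using h y))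
    refine ⟨_, hy, ?_⟩
    rw [mulVec_mulVec, ← smul_mulVec, mul_sub, hsq, mul_smul_comm, mul_one]
    congr 1
    module

theorem norm_le_l2_opNorm_of_mulVec_eq_smul [RCLike R] [Fintype n] [DecidableEq n]
    (A : Matrix n n R) {x : n → R} (hx : x ≠ 0) {c : R} (h : A *ᵥ x = c • x) : ‖c‖ ≤ ‖A‖ := by
  have hle := A.l2_opNorm_mulVec (WithLp.toLp 2 x)
  rw [h, map_smul, norm_smul] at hle
  exact le_of_mul_le_mul_right hle (by simpa using hx)

def kroneckerVec [Mul R] (x : m → R) (y : n → R) : m × n → R := fun q => x q.1 * y q.2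

theorem kroneckerVec_ne_zero [MulZeroClass R] [NoZeroDivisors R] {x : m → R} {y : n → R}
    (hx : x ≠ 0) (hy : y ≠ 0) : kroneckerVec x y ≠ 0 := by
  obtain ⟨i, hi⟩ := Function.ne_iff.mp hx
  obtain ⟨j, hj⟩ := Function.ne_iff.mp hy
  exact Function.ne_iff.mpr ⟨(i, j), mul_ne_zero hi hj⟩

theorem kronecker_mulVec_kroneckerVec [CommSemiring R] [Fintype m] [Fintype p]
    (A : Matrix l m R) (B : Matrix n p R) (x : m → R) (y : p → R) :
    (A ⊗ₖ B) *ᵥ kroneckerVec x y = kroneckerVec (A *ᵥ x) (B *ᵥ y) := by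
  ext ⟨i, j⟩
  simp only [kroneckerVec, mulVec, dotProduct, kroneckerMap_apply, Fintype.sum_prod_type,
    Finset.sum_mul_sum]
  exact Finset.sum_congr rfl fun _ _ => Finset.sum_congr rfl fun _ _ => by ring

end Matrix

theorem WK_mulVec_kroneckerVec_of_mulVec_eq_neg {K d D : ℕ}
    (Γ : Fin K → Matrix (Fin d) (Fin d) ℂ) (U : Fin K → Matrix (Fin D) (Fin D) ℂ)
    {φ : Fin d → ℂ} {μ : ℂ} (hφ : (∑ k, Γ k) *ᵥ φ = μ • φ) {v : Fin D → ℂ}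
    (hv : ∀ k, U k *ᵥ v = -v) :
    WK Γ U *ᵥ kroneckerVec φ (kroneckerVec v v)
      = ((K : ℂ) - 2 * μ) • kroneckerVec φ (kroneckerVec v v) := by
  have hsum : ∑ k, Γ k *ᵥ φ = μ • φ := by rw [← sum_mulVec, hφ]
  simp only [WK, sum_mulVec, add_mulVec, kronecker_mulVec_kroneckerVec, one_mulVec, hv]
  ext p
  have hp := congrFun hsum p.1
  simp only [Finset.sum_apply, Pi.smul_apply, smul_eq_mul] at hp
  simp only [kroneckerVec, Finset.sum_apply, Pi.add_apply, Pi.neg_apply, Pi.smul_apply,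
    smul_eq_mul, Finset.sum_add_distrib, ← Finset.sum_mul, hp, Finset.sum_const,
    Finset.card_univ, Fintype.card_fin, nsmul_eq_mul]
  ring

theorem stmt5_general (K d D r : ℕ) (hd : 0 < d) (hD : K * r + 1 ≤ D)
    (Γ : Fin K → Matrix (Fin d) (Fin d) ℂ)
    (hunit : ∀ k, Γ k * Γ k = 1)
    (htrace : ∀ k, (Γ k).trace = 0)
    (hanti : ∀ i j, i ≠ j → Γ i * Γ j + Γ j * Γ i = 0)
    (P U : Fin K → Matrix (Fin D) (Fin D) ℂ)
    (hrank : ∀ k, (P k).rank ≤ r)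
    (hU : ∀ k, U k = (2 : ℂ) • P k - 1) :
    K + 2 * Real.sqrt K ≤ ‖WK Γ U‖ := by
  obtain ⟨v, hv, hPv⟩ := exists_ne_zero_forall_mulVec_eq_zero P <|
    calc ∑ k, (P k).rank ≤ ∑ _k : Fin K, r := Finset.sum_le_sum fun k _ => hrank k
      _ < Fintype.card (Fin D) := by simp; omega
  have hUv : ∀ k, U k *ᵥ v = -v := fun k => by simp [hU k, sub_mulVec, smul_mulVec, hPv k]
  have : Nonempty (Fin d) := ⟨⟨0, hd⟩⟩
  have hsq : (∑ k, Γ k) * (∑ k, Γ k) = ((√K : ℂ) * √K) • 1 := by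
    rw [Finset.sum_mul_sum_self_eq_card_of_anticommute Γ hunit hanti, ← Complex.ofReal_mul,
      Real.mul_self_sqrt K.cast_nonneg, Complex.ofReal_natCast, Nat.cast_smul_eq_nsmul, nsmul_one,
      Finset.card_univ, Fintype.card_fin]
  obtain ⟨φ, hφ, hSφ⟩ := (∑ k, Γ k).exists_mulVec_eq_neg_smul_of_mul_self_eq (√K : ℂ) hsq
    (by simp [trace_sum, htrace])
  calc (K + 2 * √K : ℝ) = ‖(K : ℂ) - 2 * -(√K : ℂ)‖ := by
        rw [mul_neg, sub_neg_eq_add, ← Complex.ofReal_natCast, ← Complex.ofReal_ofNat,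
          ← Complex.ofReal_mul, ← Complex.ofReal_add, Complex.norm_real,
          Real.norm_of_nonneg (by positivity)]
    _ ≤ ‖WK Γ U‖ := (WK Γ U).norm_le_l2_opNorm_of_mulVec_eq_smul
        (kroneckerVec_ne_zero hφ (kroneckerVec_ne_zero hv hv))
        (WK_mulVec_kroneckerVec_of_mulVec_eq_neg Γ U hSφ hUv)

/-- For a Clifford family `Γ₁, …, Γ_K` (Hermitian, unitary, traceless,
pairwise anticommuting `d × d` matrices) and `D ≥ K·r + 1`, if each `Uₖ = 2Pₖ − I_D`
for orthogonal projections `Pₖ` of rank at most `r`, then `‖W_K(U₁,…,U_K)‖ ≥ K + 2√K`. -/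
theorem stmt5 (K d D r : ℕ) (hK : 1 ≤ K) (hd : 0 < d) (hD : K * r + 1 ≤ D)
    (Γ : Fin K → Matrix (Fin d) (Fin d) ℂ)
    (hherm : ∀ k, (Γ k).IsHermitian)
    (hunit : ∀ k, Γ k * Γ k = 1)
    (htrace : ∀ k, (Γ k).trace = 0)
    (hanti : ∀ i j, i ≠ j → Γ i * Γ j + Γ j * Γ i = 0)
    (P U : Fin K → Matrix (Fin D) (Fin D) ℂ)
    (hproj : ∀ k, (P k).IsHermitian ∧ P k * P k = P k)
    (hrank : ∀ k, (P k).rank ≤ r)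
    (hU : ∀ k, U k = (2 : ℂ) • P k - 1) :
    K + 2 * Real.sqrt K ≤ ‖WK Γ U‖ :=
  stmt5_general K d D r hd hD Γ hunit htrace hanti P U hrank hU
end

section
/- Let Γ₁,…,Γ_K (K ≥ 1) be d×d complex matrices that are Hermitian, unitary, and pairwise anticommuting, and let U₁,…,U_K be D×D Hermitian unitary matrices that pairwise commute (UᵢUⱼ = UⱼUᵢ for all i, j). Then ‖W_K(U₁,…,U_K)‖ ≤ K + 2√K, where W_K(U₁,…,U_K) := ∑_{k=1}^K ( Γₖ ⊗ (Uₖ ⊗ I_D + I_D ⊗ Uₖ) + I_d ⊗ Uₖ ⊗ Uₖ ). -/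
/-! The summand `Γₖ ⊗ (Uₖ ⊗ I + I ⊗ Uₖ)` is self-adjoint of norm at most `2`, and since the `Γₖ`
anticommute while the `Uₖ ⊗ I + I ⊗ Uₖ` commute, these summands pairwise anticommute. The square of
their sum is then the sum of their squares, so by the C*-identity its norm is at most
`√(K · 2²) = 2√K` instead of the triangle-inequality bound `2K`. The remaining summands
`I ⊗ Uₖ ⊗ Uₖ` are unitaries, contributing at most `K`. -/

open Matrix
open scoped Matrix.Norms.L2Operator Kronecker

theorem sum_mul_sum_self_of_anticommute {R ι : Type*} [Ring R] (s : Finset ι) (a : ι → R)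
    (h : ∀ i ∈ s, ∀ j ∈ s, i ≠ j → a i * a j + a j * a i = 0) :
    (∑ i ∈ s, a i) * (∑ i ∈ s, a i) = ∑ i ∈ s, a i * a i := by
  classical
  induction s using Finset.induction_on with
  | empty => simp
  | insert k s hk ih =>
    have hcross : (∑ i ∈ s, a i) * a k + a k * (∑ i ∈ s, a i) = 0 := by
      rw [Finset.sum_mul, Finset.mul_sum, ← Finset.sum_add_distrib]
      refine Finset.sum_eq_zero fun i hi => h i (Finset.mem_insert_of_mem hi) k
        (Finset.mem_insert_self k s) (ne_of_mem_of_not_mem hi hk)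
    have ih' := ih fun i hi j hj => h i (Finset.mem_insert_of_mem hi) j (Finset.mem_insert_of_mem hj)
    rw [Finset.sum_insert hk, Finset.sum_insert hk, ← ih']
    calc (a k + ∑ i ∈ s, a i) * (a k + ∑ i ∈ s, a i)
        = a k * a k + ((∑ i ∈ s, a i) * a k + a k * ∑ i ∈ s, a i)
          + (∑ i ∈ s, a i) * (∑ i ∈ s, a i) := by noncomm_ring
      _ = a k * a k + (∑ i ∈ s, a i) * (∑ i ∈ s, a i) := by rw [hcross, add_zero]

theorem IsSelfAdjoint.mem_unitary_of_mul_self_eq_one {R : Type*} [Monoid R] [StarMul R] {a : R}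
    (ha : IsSelfAdjoint a) (h : a * a = 1) : a ∈ unitary R :=
  Unitary.mem_iff.mpr ⟨by rw [ha.star_eq, h], by rw [ha.star_eq, h]⟩

section CStarRing

variable {E : Type*} [NormedRing E] [StarRing E] [CStarRing E]

theorem norm_le_one_of_mem_unitary {u : E} (hu : u ∈ unitary E) : ‖u‖ ≤ 1 := by
  cases subsingleton_or_nontrivial E
  · simp [Subsingleton.elim u 0]
  · exact (CStarRing.norm_of_mem_unitary hu).le

theorem norm_sum_le_sqrt_sum_sq_of_anticommute {ι : Type*} (s : Finset ι) (a : ι → E)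
    (hsa : ∀ i ∈ s, IsSelfAdjoint (a i))
    (hanti : ∀ i ∈ s, ∀ j ∈ s, i ≠ j → a i * a j + a j * a i = 0) :
    ‖∑ i ∈ s, a i‖ ≤ √(∑ i ∈ s, ‖a i‖ ^ 2) := by
  refine Real.le_sqrt_of_sq_le ?_
  calc ‖∑ i ∈ s, a i‖ ^ 2 = ‖∑ i ∈ s, a i * a i‖ := by
        rw [← (isSelfAdjoint_sum s hsa).norm_mul_self, sum_mul_sum_self_of_anticommute s a hanti]
    _ ≤ ∑ i ∈ s, ‖a i * a i‖ := norm_sum_le _ _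
    _ = ∑ i ∈ s, ‖a i‖ ^ 2 := Finset.sum_congr rfl fun i hi => (hsa i hi).norm_mul_self

theorem norm_sum_le_card_of_mem_unitary {ι : Type*} (s : Finset ι) {u : ι → E}
    (hu : ∀ i ∈ s, u i ∈ unitary E) : ‖∑ i ∈ s, u i‖ ≤ s.card := by
  calc ‖∑ i ∈ s, u i‖ ≤ ∑ i ∈ s, ‖u i‖ := norm_sum_le _ _
    _ ≤ ∑ _i ∈ s, (1 : ℝ) := Finset.sum_le_sum fun i hi => norm_le_one_of_mem_unitary (hu i hi)
    _ = s.card := by simp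

end CStarRing

section Kronecker

variable {R m n : Type*} [CommRing R]

def kroneckerSum [DecidableEq m] [DecidableEq n] (A : Matrix m m R) (B : Matrix n n R) :
    Matrix (m × n) (m × n) R :=
  A ⊗ₖ 1 + 1 ⊗ₖ B

theorem IsSelfAdjoint.kronecker [StarRing R] {A : Matrix m m R} {B : Matrix n n R}
    (hA : IsSelfAdjoint A) (hB : IsSelfAdjoint B) : IsSelfAdjoint (A ⊗ₖ B) := by
  rw [IsSelfAdjoint, star_eq_conjTranspose, conjTranspose_kronecker]
  exact congr_arg₂ _ hA hB

variable [Fintype m] [Fintype n]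

theorem IsSelfAdjoint.kroneckerSum [StarRing R] [DecidableEq m] [DecidableEq n]
    {A : Matrix m m R} {B : Matrix n n R} (hA : IsSelfAdjoint A) (hB : IsSelfAdjoint B) :
    IsSelfAdjoint (kroneckerSum A B) :=
  (hA.kronecker (.one _)).add ((IsSelfAdjoint.one _).kronecker hB)

theorem Commute.kronecker {A B : Matrix m m R} {C D : Matrix n n R} (hAB : Commute A B)
    (hCD : Commute C D) : Commute (A ⊗ₖ C) (B ⊗ₖ D) := by
  rw [Commute, SemiconjBy, ← mul_kronecker_mul, ← mul_kronecker_mul, hAB.eq, hCD.eq]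

theorem Commute.kroneckerSum [DecidableEq m] [DecidableEq n] {A B : Matrix m m R}
    {C D : Matrix n n R} (hAB : Commute A B) (hCD : Commute C D) :
    Commute (kroneckerSum A C) (kroneckerSum B D) :=
  (((hAB.kronecker (.refl 1)).add_right ((Commute.one_right A).kronecker (.one_left D)))).add_left
    (((Commute.one_left B).kronecker (.one_right C)).add_right ((Commute.refl 1).kronecker hCD))

theorem kronecker_mul_add_kronecker_mul_eq_zero {A B : Matrix m m R} {C D : Matrix n n R}
    (hAB : A * B + B * A = 0) (hCD : Commute C D) :
    (A ⊗ₖ C) * (B ⊗ₖ D) + (B ⊗ₖ D) * (A ⊗ₖ C) = 0 := by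
  rw [← mul_kronecker_mul, ← mul_kronecker_mul, ← hCD.eq, ← add_kronecker, hAB, zero_kronecker]

end Kronecker

section L2OpNorm

variable {𝕜 ι l n : Type*} [RCLike 𝕜] [Fintype l] [DecidableEq l] [Fintype n] [DecidableEq n]

theorem norm_kronecker_kroneckerSum_le_two {Γ : Matrix l l 𝕜} {A B : Matrix n n 𝕜}
    (hΓ : Γ ∈ unitary _) (hA : A ∈ unitary _) (hB : B ∈ unitary _) :
    ‖Γ ⊗ₖ kroneckerSum A B‖ ≤ 2 := by
  have h1 : (1 : Matrix n n 𝕜) ∈ unitary _ := one_mem _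
  calc ‖Γ ⊗ₖ kroneckerSum A B‖ ≤ ‖Γ ⊗ₖ (A ⊗ₖ (1 : Matrix n n 𝕜))‖
        + ‖Γ ⊗ₖ ((1 : Matrix n n 𝕜) ⊗ₖ B)‖ := by
        rw [kroneckerSum, kronecker_add]; exact norm_add_le _ _
    _ ≤ 1 + 1 := add_le_add
        (norm_le_one_of_mem_unitary (kronecker_mem_unitary hΓ (kronecker_mem_unitary hA h1)))
        (norm_le_one_of_mem_unitary (kronecker_mem_unitary hΓ (kronecker_mem_unitary h1 hB)))
    _ = 2 := one_add_one_eq_two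

theorem norm_sum_kronecker_kroneckerSum_le [Fintype ι] (Γ : ι → Matrix l l 𝕜)
    (U : ι → Matrix n n 𝕜) (hΓ : ∀ i, (Γ i).IsHermitian) (hΓ_sq : ∀ i, Γ i * Γ i = 1)
    (hΓ_anti : ∀ i j, i ≠ j → Γ i * Γ j + Γ j * Γ i = 0) (hU : ∀ i, (U i).IsHermitian)
    (hU_sq : ∀ i, U i * U i = 1) (hU_comm : ∀ i j, Commute (U i) (U j)) :
    ‖∑ i, Γ i ⊗ₖ kroneckerSum (U i) (U i)‖ ≤ 2 * √(Fintype.card ι) := by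
  have hnorm i : ‖Γ i ⊗ₖ kroneckerSum (U i) (U i)‖ ^ 2 ≤ 2 ^ 2 := by
    have hUu := (hU i).isSelfAdjoint.mem_unitary_of_mul_self_eq_one (hU_sq i)
    exact pow_le_pow_left₀ (norm_nonneg _) (norm_kronecker_kroneckerSum_le_two
      ((hΓ i).isSelfAdjoint.mem_unitary_of_mul_self_eq_one (hΓ_sq i)) hUu hUu) 2
  calc ‖∑ i, Γ i ⊗ₖ kroneckerSum (U i) (U i)‖
      ≤ √(∑ i, ‖Γ i ⊗ₖ kroneckerSum (U i) (U i)‖ ^ 2) :=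
        norm_sum_le_sqrt_sum_sq_of_anticommute _ _
          (fun i _ => (hΓ i).isSelfAdjoint.kronecker
            ((hU i).isSelfAdjoint.kroneckerSum (hU i).isSelfAdjoint))
          fun i _ j _ hij => kronecker_mul_add_kronecker_mul_eq_zero (hΓ_anti i j hij)
            ((hU_comm i j).kroneckerSum (hU_comm i j))
    _ ≤ √(∑ _i : ι, 2 ^ 2) := Real.sqrt_le_sqrt (Finset.sum_le_sum fun i _ => hnorm i)
    _ = 2 * √(Fintype.card ι) := by simp [mul_comm]

end L2OpNorm

theorem stmt6_general (K d D : ℕ)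
    (Γ : Fin K → Matrix (Fin d) (Fin d) ℂ)
    (hherm : ∀ k, (Γ k).IsHermitian)
    (hunit : ∀ k, Γ k * Γ k = 1)
    (hanti : ∀ i j, i ≠ j → Γ i * Γ j + Γ j * Γ i = 0)
    (U : Fin K → Matrix (Fin D) (Fin D) ℂ)
    (hUherm : ∀ k, (U k).IsHermitian)
    (hUunit : ∀ k, U k * U k = 1)
    (hUcomm : ∀ i j, U i * U j = U j * U i) :
    ‖WK Γ U‖ ≤ K + 2 * Real.sqrt K := by
  have hUu k := (hUherm k).isSelfAdjoint.mem_unitary_of_mul_self_eq_one (hUunit k)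
  have hdiag := norm_sum_le_card_of_mem_unitary (Finset.univ : Finset (Fin K)) fun k _ =>
    kronecker_mem_unitary (one_mem (unitary (Matrix (Fin d) (Fin d) ℂ)))
      (kronecker_mem_unitary (hUu k) (hUu k))
  have hclifford := norm_sum_kronecker_kroneckerSum_le Γ U hherm hunit hanti hUherm hUunit hUcomm
  rw [Finset.card_fin] at hdiag
  rw [Fintype.card_fin] at hclifford
  calc ‖WK Γ U‖ ≤ ‖∑ k, Γ k ⊗ₖ kroneckerSum (U k) (U k)‖
        + ‖∑ k, (1 : Matrix (Fin d) (Fin d) ℂ) ⊗ₖ (U k ⊗ₖ U k)‖ := by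
        rw [WK, Finset.sum_add_distrib]; exact norm_add_le _ _
    _ ≤ K + 2 * √K := by linarith

/-- For a Clifford family `Γ₁, …, Γ_K` (Hermitian, unitary, pairwise
anticommuting `d × d` matrices) and pairwise commuting `D × D` Hermitian unitaries
`U₁, …, U_K`, one has `‖W_K(U₁,…,U_K)‖ ≤ K + 2√K`. -/
theorem stmt6 (K d D : ℕ) (hK : 1 ≤ K)
    (Γ : Fin K → Matrix (Fin d) (Fin d) ℂ)
    (hherm : ∀ k, (Γ k).IsHermitian)
    (hunit : ∀ k, Γ k * Γ k = 1)
    (hanti : ∀ i j, i ≠ j → Γ i * Γ j + Γ j * Γ i = 0)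
    (U : Fin K → Matrix (Fin D) (Fin D) ℂ)
    (hUherm : ∀ k, (U k).IsHermitian)
    (hUunit : ∀ k, U k * U k = 1)
    (hUcomm : ∀ i j, U i * U j = U j * U i) :
    ‖WK Γ U‖ ≤ K + 2 * Real.sqrt K :=
  stmt6_general K d D Γ hherm hunit hanti U hUherm hUunit hUcomm
end

section
/- Let Γ₁,…,Γ_K (K ≥ 1) be d×d complex matrices that are Hermitian, unitary, and pairwise anticommuting, and let U₁,…,U_K be arbitrary D×D Hermitian unitary matrices. Then the Hermitian matrix W_K(U₁,…,U_K) + K · I_{d·D²} is positive semidefinite, where W_K(U₁,…,U_K) := ∑_{k=1}^K ( Γₖ ⊗ (Uₖ ⊗ I_D + I_D ⊗ Uₖ) + I_d ⊗ Uₖ ⊗ Uₖ ). Equivalently, every eigenvalue of W_K(U₁,…,U_K) is at least −K. -/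
open Matrix
open scoped Kronecker ComplexOrder

lemma kron_conjT {m n : Type*} [Fintype m] [Fintype n] (A : Matrix m m ℂ) (B : Matrix n n ℂ) :
    (A ⊗ₖ B)ᴴ = Aᴴ ⊗ₖ Bᴴ := by
  ext ⟨i₁, i₂⟩ ⟨j₁, j₂⟩
  simp [conjTranspose_apply, kroneckerMap_apply, star_mul', mul_comm]

lemma key_term {d D : ℕ} (G : Matrix (Fin d) (Fin d) ℂ) (V : Matrix (Fin D) (Fin D) ℂ)
    (hG : G.IsHermitian) (hG2 : G * G = 1) (hV : V.IsHermitian) (hV2 : V * V = 1) :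
    (G ⊗ₖ (V ⊗ₖ (1 : Matrix (Fin D) (Fin D) ℂ)
          + (1 : Matrix (Fin D) (Fin D) ℂ) ⊗ₖ V)
        + (1 : Matrix (Fin d) (Fin d) ℂ) ⊗ₖ (V ⊗ₖ V)
        + (1 : Matrix (Fin d × (Fin D × Fin D)) (Fin d × (Fin D × Fin D)) ℂ)).PosSemidef := by
  set x : Matrix (Fin d × (Fin D × Fin D)) (Fin d × (Fin D × Fin D)) ℂ :=
    G ⊗ₖ (V ⊗ₖ (1 : Matrix (Fin D) (Fin D) ℂ)) with hx
  set y : Matrix (Fin d × (Fin D × Fin D)) (Fin d × (Fin D × Fin D)) ℂ :=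
    G ⊗ₖ ((1 : Matrix (Fin D) (Fin D) ℂ) ⊗ₖ V) with hy
  have hxH : xᴴ = x := by
    rw [hx, kron_conjT, kron_conjT, hG.eq, hV.eq, conjTranspose_one]
  have hyH : yᴴ = y := by
    rw [hy, kron_conjT, kron_conjT, hG.eq, hV.eq, conjTranspose_one]
  have hx2 : x * x = 1 := by
    rw [hx, ← mul_kronecker_mul, ← mul_kronecker_mul, hG2, hV2, one_mul, one_kronecker_one,
      one_kronecker_one]
  have hy2 : y * y = 1 := by
    rw [hy, ← mul_kronecker_mul, ← mul_kronecker_mul, hG2, hV2, mul_one, one_kronecker_one,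
      one_kronecker_one]
  have hxy : x * y = (1 : Matrix (Fin d) (Fin d) ℂ) ⊗ₖ (V ⊗ₖ V) := by
    rw [hx, hy, ← mul_kronecker_mul, ← mul_kronecker_mul, hG2, mul_one, one_mul]
  have hyx : y * x = (1 : Matrix (Fin d) (Fin d) ℂ) ⊗ₖ (V ⊗ₖ V) := by
    rw [hx, hy, ← mul_kronecker_mul, ← mul_kronecker_mul, hG2, mul_one, one_mul]
  have hgoal : G ⊗ₖ (V ⊗ₖ (1 : Matrix (Fin D) (Fin D) ℂ)
          + (1 : Matrix (Fin D) (Fin D) ℂ) ⊗ₖ V)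
        + (1 : Matrix (Fin d) (Fin d) ℂ) ⊗ₖ (V ⊗ₖ V)
        + (1 : Matrix (Fin d × (Fin D × Fin D)) (Fin d × (Fin D × Fin D)) ℂ)
      = x + y + x * y + 1 := by
    rw [kronecker_add, ← hxy]
  rw [hgoal]
  have hyx' : y * x = x * y := hyx.trans hxy.symm
  have hxx' : ∀ z, x * (x * z) = z := fun z => by rw [← mul_assoc, hx2, one_mul]
  have hyy' : ∀ z, y * (y * z) = z := fun z => by rw [← mul_assoc, hy2, one_mul]
  have hcomm : ∀ z, y * (x * z) = x * (y * z) := fun z => by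
    rw [← mul_assoc, hyx', mul_assoc]
  have key : (1 + x) * (1 + y) * ((1 + y) * (1 + x)) = (4 : ℂ) • (x + y + x * y + 1) := by
    simp only [mul_add, add_mul, mul_one, one_mul, hx2, hy2, mul_assoc, hcomm, hyx', hxx', hyy']
    module
  have hfac : x + y + x * y + 1
      = ((1/2 : ℂ) • ((1 + y) * (1 + x)))ᴴ * ((1/2 : ℂ) • ((1 + y) * (1 + x))) := by
    rw [conjTranspose_smul, conjTranspose_mul, conjTranspose_add, conjTranspose_add,
      conjTranspose_one, hxH, hyH, smul_mul_smul_comm, key]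
    rw [smul_smul]
    norm_num
  rw [hfac]
  exact posSemidef_conjTranspose_mul_self _


/-- For a Clifford family `Γ₁, …, Γ_K` (Hermitian, unitary, pairwise
anticommuting `d × d` matrices) and arbitrary `D × D` Hermitian unitaries `U₁, …, U_K`,
the matrix `W_K(U₁,…,U_K) + K·I` is positive semidefinite; equivalently every
eigenvalue of `W_K(U₁,…,U_K)` is at least `−K`. -/
theorem stmt7 (K d D : ℕ) (hK : 1 ≤ K)
    (Γ : Fin K → Matrix (Fin d) (Fin d) ℂ)
    (hherm : ∀ k, (Γ k).IsHermitian)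
    (hunit : ∀ k, Γ k * Γ k = 1)
    (hanti : ∀ i j, i ≠ j → Γ i * Γ j + Γ j * Γ i = 0)
    (U : Fin K → Matrix (Fin D) (Fin D) ℂ)
    (hUherm : ∀ k, (U k).IsHermitian)
    (hUunit : ∀ k, U k * U k = 1) :
    (WK Γ U + (K : ℂ) •
      (1 : Matrix (Fin d × (Fin D × Fin D)) (Fin d × (Fin D × Fin D)) ℂ)).PosSemidef := by
  have h1 : ((K : ℂ) • (1 : Matrix (Fin d × (Fin D × Fin D)) (Fin d × (Fin D × Fin D)) ℂ))
      = ∑ _k : Fin K, (1 : Matrix (Fin d × (Fin D × Fin D)) (Fin d × (Fin D × Fin D)) ℂ) := by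
    rw [Finset.sum_const, Finset.card_univ, Fintype.card_fin, Nat.cast_smul_eq_nsmul]
  have hrw : WK Γ U + (K : ℂ) •
      (1 : Matrix (Fin d × (Fin D × Fin D)) (Fin d × (Fin D × Fin D)) ℂ)
      = ∑ k : Fin K, (Γ k ⊗ₖ (U k ⊗ₖ (1 : Matrix (Fin D) (Fin D) ℂ)
          + (1 : Matrix (Fin D) (Fin D) ℂ) ⊗ₖ U k)
        + (1 : Matrix (Fin d) (Fin d) ℂ) ⊗ₖ (U k ⊗ₖ U k)
        + (1 : Matrix (Fin d × (Fin D × Fin D)) (Fin d × (Fin D × Fin D)) ℂ)) := by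
    rw [WK, h1, ← Finset.sum_add_distrib]
  rw [hrw]
  have hpsd : ∀ k ∈ (Finset.univ : Finset (Fin K)),
      (Γ k ⊗ₖ (U k ⊗ₖ (1 : Matrix (Fin D) (Fin D) ℂ)
          + (1 : Matrix (Fin D) (Fin D) ℂ) ⊗ₖ U k)
        + (1 : Matrix (Fin d) (Fin d) ℂ) ⊗ₖ (U k ⊗ₖ U k)
        + (1 : Matrix (Fin d × (Fin D × Fin D)) (Fin d × (Fin D × Fin D)) ℂ)).PosSemidef :=
    fun k _ => key_term (Γ k) (U k) (hherm k) (hunit k) (hUherm k) (hUunit k)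
  exact Finset.sum_induction _ _ (fun a b ha hb => ha.add hb) Matrix.PosSemidef.zero hpsd
end

section
/- Let 2 ≤ K ≤ 7, let Γ₁,…,Γ_K be d×d complex matrices that are Hermitian, unitary, and pairwise anticommuting, and let B₁,…,B_K and C₁,…,C_K be arbitrary D×D Hermitian unitary matrices. Then ‖∑_{k=1}^K ( Γₖ ⊗ (Bₖ ⊗ I_D + I_D ⊗ Cₖ) + I_d ⊗ Bₖ ⊗ Cₖ )‖ ≤ K + 2√K. (Consequently the winning probability of the no-cloning game for the Clifford encryption scheme with K keys is at most 1/2 + 1/(2√K) for these K.) -/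
/-!
Put `Xₖ = Γₖ ⊗ Bₖ ⊗ I` and `Yₖ = Γₖ ⊗ I ⊗ Cₖ`. These are Hermitian unitaries, `Xₖ` commutes
with `Yₖ` (their product is `I ⊗ Bₖ ⊗ Cₖ`), `Xⱼ` anticommutes with `Yₖ` for `j ≠ k`, and the game
operator is `∑ₖ (Xₖ + Yₖ + XₖYₖ)`. Each summand is `≥ -1`, since `1 + X + Y + XY = (1 + X)(1 + Y)`
is four times a projection. For the upper bound take a unit vector `x`, `uₖ = Xₖ x`, `vₖ = Yₖ x`,
`a = ∑ uₖ`, `b = ∑ vₖ`. Anticommutation gives `Re⟪uⱼ, vₖ⟫ = 0` for `j ≠ k`, so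
`t := ∑ Re⟪uₖ, vₖ⟫ = Re⟪a, b⟫` and `‖a + b‖² = ‖a - b‖² + 4t`, while Cauchy–Schwarz gives
`‖a - b‖² ≤ K ∑ ‖uₖ - vₖ‖² = K S` with `S = 2K - 2t ≥ 0`. The quadratic form is therefore at most
`‖a + b‖ + t ≤ √(4K + (K - 2) S) + K - S / 2`, which is `≤ K + 2√K` as soon as `K - 2 ≤ 2√K`,
in particular for `K ≤ 7`.
-/

open Finset RCLike

local notation "⟪" x ", " y "⟫" => @inner ℂ _ _ x y

theorem sq_norm_sum_le_card_mul_sum_sq_norm {F ι : Type*} [SeminormedAddCommGroup F]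
    [Fintype ι] (f : ι → F) :
    ‖∑ k, f k‖ ^ 2 ≤ Fintype.card ι * ∑ k, ‖f k‖ ^ 2 :=
  calc ‖∑ k, f k‖ ^ 2 ≤ (∑ k, ‖f k‖) ^ 2 := by gcongr; exact norm_sum_le _ _
    _ ≤ _ := by simpa using sq_sum_le_card_mul_sum_sq (s := univ) (f := fun k => ‖f k‖)

theorem sub_two_le_two_mul_sqrt_of_le_seven {n : ℕ} (hn : n ≤ 7) :
    (n : ℝ) - 2 ≤ 2 * √n := by
  have hs : √n ^ 2 = n := Real.sq_sqrt n.cast_nonneg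
  have h7 : (n : ℝ) ≤ 7 := by exact_mod_cast hn
  nlinarith [Real.sqrt_nonneg n]

section InnerProductSpace

variable {E ι : Type*} [NormedAddCommGroup E] [InnerProductSpace ℂ E] [Fintype ι]

theorem re_inner_sum_sum_eq_sum_re_inner {u v : ι → E}
    (horth : ∀ j k, j ≠ k → re ⟪u j, v k⟫ = 0) :
    re ⟪∑ j, u j, ∑ k, v k⟫ = ∑ k, re ⟪u k, v k⟫ := by
  classical
  simp only [sum_inner, inner_sum, map_sum]
  exact sum_congr rfl fun j _ =>
    sum_eq_single j (fun k _ hkj => horth k j hkj) (by simp)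

theorem sum_re_inner_add_re_inner_le {r : ℝ} (w : E) (u v : ι → E)
    (hK : (Fintype.card ι : ℝ) - 2 ≤ 2 * √(Fintype.card ι))
    (hw : ‖w‖ = r) (hu : ∀ k, ‖u k‖ = r) (hv : ∀ k, ‖v k‖ = r)
    (horth : ∀ j k, j ≠ k → re ⟪u j, v k⟫ = 0) :
    ∑ k, (re ⟪u k, w⟫ + re ⟪v k, w⟫ + re ⟪u k, v k⟫)
      ≤ (Fintype.card ι + 2 * √(Fintype.card ι)) * r ^ 2 := by
  set K : ℝ := (Fintype.card ι : ℝ)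
  set a := ∑ k, u k
  set b := ∑ k, v k
  set t := ∑ k, re ⟪u k, v k⟫
  have hr : 0 ≤ r := hw ▸ norm_nonneg w
  have hab : re ⟪a, b⟫ = t := re_inner_sum_sum_eq_sum_re_inner horth
  have hS : ∑ k, ‖u k - v k‖ ^ 2 = 2 * K * r ^ 2 - 2 * t := by
    simp only [norm_sub_sq (𝕜 := ℂ), hu, hv, sum_add_distrib, sum_sub_distrib, sum_const,
      card_univ, nsmul_eq_mul, ← mul_sum, t, K]
    ring
  have hS0 : 0 ≤ 2 * K * r ^ 2 - 2 * t := hS ▸ sum_nonneg fun k _ => sq_nonneg _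
  have hdiff : ‖a - b‖ ^ 2 ≤ K * (2 * K * r ^ 2 - 2 * t) := by
    rw [← hS, ← sum_sub_distrib]
    exact sq_norm_sum_le_card_mul_sum_sq_norm _
  have hsum : ‖a + b‖ ^ 2 = ‖a - b‖ ^ 2 + 4 * t := by
    rw [norm_add_sq (𝕜 := ℂ), norm_sub_sq (𝕜 := ℂ), hab]; ring
  have hsqrt : √K ^ 2 = K := Real.sq_sqrt (by positivity)
  have hab_le : r * ‖a + b‖ ≤ 2 * √K * r ^ 2 + (2 * K * r ^ 2 - 2 * t) / 2 := by
    rw [← sq_le_sq₀ (by positivity) (by positivity)]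
    have hKS := mul_le_mul_of_nonneg_right hK (mul_nonneg (sq_nonneg r) hS0)
    calc (r * ‖a + b‖) ^ 2 = r ^ 2 * (‖a - b‖ ^ 2 + 4 * t) := by rw [mul_pow, hsum]
      _ ≤ r ^ 2 * (K * (2 * K * r ^ 2 - 2 * t) + 4 * t) := by gcongr
      _ ≤ _ := by
        rw [add_sq, mul_pow, mul_pow, hsqrt]
        nlinarith [sq_nonneg (2 * K * r ^ 2 - 2 * t)]
  have hwab : re ⟪a + b, w⟫ ≤ r * ‖a + b‖ := by
    rw [← hw, mul_comm]
    exact re_inner_le_norm (a + b) w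
  have hlhs : ∑ k, (re ⟪u k, w⟫ + re ⟪v k, w⟫ + re ⟪u k, v k⟫) = re ⟪a + b, w⟫ + t := by
    simp only [sum_add_distrib, inner_add_left, sum_inner, map_add, map_sum, a, b, t]
  rw [hlhs]
  linarith

end InnerProductSpace

namespace ContinuousLinearMap

variable {E : Type*} [NormedAddCommGroup E] [InnerProductSpace ℂ E] [CompleteSpace E]

theorem norm_le_of_abs_re_inner_le {T : E →L[ℂ] E} (hT : IsSelfAdjoint T) {c : ℝ}
    (hc : 0 ≤ c) (h : ∀ x, |re ⟪T x, x⟫| ≤ c * ‖x‖ ^ 2) : ‖T‖ ≤ c := by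
  rw [T.norm_eq_iSup_rayleighQuotient hT.isSymmetric]
  refine ciSup_le fun x => ?_
  rcases eq_or_ne x 0 with rfl | hx
  · simpa using hc
  · rw [rayleighQuotient, reApplyInnerSelf_apply, abs_div, abs_sq,
      div_le_iff₀ (by positivity)]
    exact h x

theorem inner_mul_apply_of_isSelfAdjoint {A : E →L[ℂ] E} (hA : IsSelfAdjoint A)
    (B : E →L[ℂ] E) (x y : E) : ⟪(A * B) x, y⟫ = ⟪B x, A y⟫ :=
  hA.isSymmetric (B x) y

theorem norm_apply_of_isSelfAdjoint_of_mul_self_eq_one {X : E →L[ℂ] E} (hX : IsSelfAdjoint X)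
    (hXX : X * X = 1) (x : E) : ‖X x‖ = ‖x‖ := by
  have h : ‖X x‖ ^ 2 = ‖x‖ ^ 2 := by
    rw [← inner_self_eq_norm_sq (𝕜 := ℂ), ← inner_self_eq_norm_sq (𝕜 := ℂ),
      ← inner_mul_apply_of_isSelfAdjoint hX, hXX, one_apply_eq_self]
  exact (sq_eq_sq₀ (norm_nonneg _) (norm_nonneg _)).mp h

theorem neg_sq_norm_le_re_inner_add_add_mul {X Y : E →L[ℂ] E} (hX : IsSelfAdjoint X)
    (hY : IsSelfAdjoint Y) (hXX : X * X = 1) (hYY : Y * Y = 1) (hXY : Commute X Y) (x : E) :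
    -‖x‖ ^ 2 ≤ re ⟪(X + Y + X * Y) x, x⟫ := by
  set Q := (1 + X) * (1 + Y)
  have hc : Commute (1 + X) (1 + Y) :=
    (Commute.one_left _).add_left ((Commute.one_right X).add_right hXY)
  have hQ : IsSelfAdjoint Q :=
    (((IsSelfAdjoint.one _).add hX).commute_iff ((IsSelfAdjoint.one _).add hY)).mp hc
  have hQQ : Q * Q = 4 * Q := by
    have hX2 : (1 + X) * (1 + X) = 2 * (1 + X) := by
      rw [add_mul, mul_add, mul_add, hXX]; noncomm_ring
    have hY2 : (1 + Y) * (1 + Y) = 2 * (1 + Y) := by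
      rw [add_mul, mul_add, mul_add, hYY]; noncomm_ring
    calc Q * Q = (1 + X) * ((1 + Y) * (1 + X)) * (1 + Y) := by simp only [Q, mul_assoc]
      _ = (1 + X) * (1 + X) * ((1 + Y) * (1 + Y)) := by rw [← hc.eq]; simp only [mul_assoc]
      _ = 4 * Q := by rw [hX2, hY2]; simp only [Q]; noncomm_ring
  have hpos : 0 ≤ re ⟪Q x, x⟫ := by
    have : 4 * re ⟪Q x, x⟫ = ‖Q x‖ ^ 2 := by
      rw [← inner_self_eq_norm_sq (𝕜 := ℂ), ← inner_mul_apply_of_isSelfAdjoint hQ, hQQ]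
      simp [← Nat.cast_smul_eq_nsmul ℂ, mul_comm]
    nlinarith [sq_nonneg ‖Q x‖]
  have hsplit : Q = 1 + (X + Y + X * Y) := by
    simp only [Q, add_mul, mul_add, one_mul, mul_one]; abel
  rw [hsplit, add_apply, one_apply_eq_self, inner_add_left, map_add,
    inner_self_eq_norm_sq] at hpos
  linarith

variable {ι : Type*} [Fintype ι] {X Y : ι → E →L[ℂ] E}

theorem re_inner_sum_add_add_mul_le (hK : (Fintype.card ι : ℝ) - 2 ≤ 2 * √(Fintype.card ι))
    (hX : ∀ k, IsSelfAdjoint (X k)) (hY : ∀ k, IsSelfAdjoint (Y k))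
    (hXX : ∀ k, X k * X k = 1) (hYY : ∀ k, Y k * Y k = 1) (hXY : ∀ k, Commute (X k) (Y k))
    (hanti : ∀ j k, j ≠ k → X j * Y k + Y k * X j = 0) (x : E) :
    re ⟪(∑ k, (X k + Y k + X k * Y k)) x, x⟫
      ≤ (Fintype.card ι + 2 * √(Fintype.card ι)) * ‖x‖ ^ 2 := by
  have horth : ∀ j k, j ≠ k → re ⟪X j x, Y k x⟫ = 0 := by
    intro j k hjk
    have h := congrArg (fun T => re ⟪T x, x⟫) (hanti j k hjk)
    simp only [add_apply, inner_add_left, map_add, zero_apply, inner_zero_left, map_zero,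
      inner_mul_apply_of_isSelfAdjoint (hX j), inner_mul_apply_of_isSelfAdjoint (hY k)] at h
    rw [inner_re_symm] at h
    linarith
  have hform : re ⟪(∑ k, (X k + Y k + X k * Y k)) x, x⟫
      = ∑ k, (re ⟪X k x, x⟫ + re ⟪Y k x, x⟫ + re ⟪X k x, Y k x⟫) := by
    simp only [_root_.sum_apply, add_apply, sum_inner, inner_add_left, map_add, map_sum,
      (hXY _).eq, inner_mul_apply_of_isSelfAdjoint (hY _)]
  rw [hform]
  exact sum_re_inner_add_re_inner_le x (fun k => X k x) (fun k => Y k x) hK rfl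
    (fun k => norm_apply_of_isSelfAdjoint_of_mul_self_eq_one (hX k) (hXX k) x)
    (fun k => norm_apply_of_isSelfAdjoint_of_mul_self_eq_one (hY k) (hYY k) x) horth

theorem norm_sum_add_add_mul_le (hK : (Fintype.card ι : ℝ) - 2 ≤ 2 * √(Fintype.card ι))
    (hX : ∀ k, IsSelfAdjoint (X k)) (hY : ∀ k, IsSelfAdjoint (Y k))
    (hXX : ∀ k, X k * X k = 1) (hYY : ∀ k, Y k * Y k = 1) (hXY : ∀ k, Commute (X k) (Y k))
    (hanti : ∀ j k, j ≠ k → X j * Y k + Y k * X j = 0) :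
    ‖∑ k, (X k + Y k + X k * Y k)‖ ≤ Fintype.card ι + 2 * √(Fintype.card ι) := by
  have hsa : IsSelfAdjoint (∑ k, (X k + Y k + X k * Y k)) :=
    isSelfAdjoint_sum _ fun k _ =>
      ((hX k).add (hY k)).add (((hX k).commute_iff (hY k)).mp (hXY k))
  refine norm_le_of_abs_re_inner_le hsa (by positivity) fun x => abs_le.mpr ⟨?_, ?_⟩
  · have hlow := sum_le_sum fun k (_ : k ∈ univ) =>
      neg_sq_norm_le_re_inner_add_add_mul (hX k) (hY k) (hXX k) (hYY k) (hXY k) x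
    simp only [sum_const, card_univ, nsmul_eq_mul, ← map_sum, ← sum_inner,
      ← _root_.sum_apply] at hlow
    nlinarith [Real.sqrt_nonneg (Fintype.card ι), sq_nonneg ‖x‖]
  · exact re_inner_sum_add_add_mul_le hK hX hY hXX hYY hXY hanti x

end ContinuousLinearMap

open Matrix
open scoped Kronecker Matrix.Norms.L2Operator

namespace Matrix

theorem IsHermitian.kronecker {R m n : Type*} [CommRing R] [StarRing R] {A : Matrix m m R}
    {B : Matrix n n R} (hA : A.IsHermitian) (hB : B.IsHermitian) : (A ⊗ₖ B).IsHermitian := by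
  rw [IsHermitian, conjTranspose_kronecker, hA.eq, hB.eq]

variable {n ι : Type*} [Fintype n] [DecidableEq n] [Fintype ι] {X Y : ι → Matrix n n ℂ}

theorem norm_sum_add_add_mul_le (hK : (Fintype.card ι : ℝ) - 2 ≤ 2 * √(Fintype.card ι))
    (hX : ∀ k, (X k).IsHermitian) (hY : ∀ k, (Y k).IsHermitian)
    (hXX : ∀ k, X k * X k = 1) (hYY : ∀ k, Y k * Y k = 1) (hXY : ∀ k, Commute (X k) (Y k))
    (hanti : ∀ j k, j ≠ k → X j * Y k + Y k * X j = 0) :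
    ‖∑ k, (X k + Y k + X k * Y k)‖ ≤ Fintype.card ι + 2 * √(Fintype.card ι) := by
  have h := ContinuousLinearMap.norm_sum_add_add_mul_le
    (X := fun k => toEuclideanCLM (𝕜 := ℂ) (n := n) (X k))
    (Y := fun k => toEuclideanCLM (𝕜 := ℂ) (n := n) (Y k)) hK
    (fun k => (hX k).isSelfAdjoint.map _) (fun k => (hY k).isSelfAdjoint.map _)
    (fun k => by simp only [← map_mul, hXX k, map_one])
    (fun k => by simp only [← map_mul, hYY k, map_one]) (fun k => (hXY k).map _)
    (fun j k hjk => by simp only [← map_mul, ← map_add, hanti j k hjk, map_zero])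
  simpa only [cstar_norm_def, map_sum, map_add, map_mul] using h

end Matrix

theorem stmt10_general (K d D : ℕ) (hK7 : K ≤ 7)
    (Γ : Fin K → Matrix (Fin d) (Fin d) ℂ)
    (hherm : ∀ k, (Γ k).IsHermitian)
    (hunit : ∀ k, Γ k * Γ k = 1)
    (hanti : ∀ i j, i ≠ j → Γ i * Γ j + Γ j * Γ i = 0)
    (B C : Fin K → Matrix (Fin D) (Fin D) ℂ)
    (hBherm : ∀ k, (B k).IsHermitian) (hBunit : ∀ k, B k * B k = 1)
    (hCherm : ∀ k, (C k).IsHermitian) (hCunit : ∀ k, C k * C k = 1) :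
    ‖∑ k, (Γ k ⊗ₖ (B k ⊗ₖ (1 : Matrix (Fin D) (Fin D) ℂ)
            + (1 : Matrix (Fin D) (Fin D) ℂ) ⊗ₖ C k)
          + (1 : Matrix (Fin d) (Fin d) ℂ) ⊗ₖ (B k ⊗ₖ C k))‖
      ≤ K + 2 * Real.sqrt K := by
  set X := fun k => Γ k ⊗ₖ (B k ⊗ₖ (1 : Matrix (Fin D) (Fin D) ℂ))
  set Y := fun k => Γ k ⊗ₖ ((1 : Matrix (Fin D) (Fin D) ℂ) ⊗ₖ C k)
  have hXY : ∀ j k, X j * Y k = (Γ j * Γ k) ⊗ₖ (B j ⊗ₖ C k) := fun j k => by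
    simp only [X, Y, ← mul_kronecker_mul, mul_one, one_mul]
  have hYX : ∀ j k, Y k * X j = (Γ k * Γ j) ⊗ₖ (B j ⊗ₖ C k) := fun j k => by
    simp only [X, Y, ← mul_kronecker_mul, mul_one, one_mul]
  have hgame : ∀ k, Γ k ⊗ₖ (B k ⊗ₖ 1 + 1 ⊗ₖ C k) + 1 ⊗ₖ (B k ⊗ₖ C k)
      = X k + Y k + X k * Y k := fun k => by
    rw [hXY, hunit, kronecker_add]
  simp_rw [hgame]
  have hK : (Fintype.card (Fin K) : ℝ) - 2 ≤ 2 * √(Fintype.card (Fin K)) := by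
    simpa only [Fintype.card_fin] using sub_two_le_two_mul_sqrt_of_le_seven hK7
  have h := Matrix.norm_sum_add_add_mul_le (X := X) (Y := Y) hK
    (fun k => (hherm k).kronecker ((hBherm k).kronecker isHermitian_one))
    (fun k => (hherm k).kronecker (isHermitian_one.kronecker (hCherm k)))
    (fun k => by simp only [X, ← mul_kronecker_mul, hunit, hBunit, mul_one, one_kronecker_one])
    (fun k => by simp only [Y, ← mul_kronecker_mul, hunit, hCunit, mul_one, one_kronecker_one])
    (fun k => by rw [Commute, SemiconjBy, hXY, hYX])
    (fun j k hjk => by rw [hXY, hYX, ← add_kronecker, hanti j k hjk, zero_kronecker])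
  simpa only [Fintype.card_fin] using h

/-- For `2 ≤ K ≤ 7`, a Clifford family `Γ₁, …, Γ_K` (Hermitian,
unitary, pairwise anticommuting `d × d` matrices), and arbitrary `D × D` Hermitian
unitaries `B₁,…,B_K`, `C₁,…,C_K`, the game operator
`∑ₖ (Γₖ ⊗ (Bₖ ⊗ I_D + I_D ⊗ Cₖ) + I_d ⊗ Bₖ ⊗ Cₖ)` has operator norm at most
`K + 2√K` — hence the no-cloning game value is at most `1/2 + 1/(2√K)` for these `K`. -/
theorem stmt10 (K d D : ℕ) (hK2 : 2 ≤ K) (hK7 : K ≤ 7)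
    (Γ : Fin K → Matrix (Fin d) (Fin d) ℂ)
    (hherm : ∀ k, (Γ k).IsHermitian)
    (hunit : ∀ k, Γ k * Γ k = 1)
    (hanti : ∀ i j, i ≠ j → Γ i * Γ j + Γ j * Γ i = 0)
    (B C : Fin K → Matrix (Fin D) (Fin D) ℂ)
    (hBherm : ∀ k, (B k).IsHermitian) (hBunit : ∀ k, B k * B k = 1)
    (hCherm : ∀ k, (C k).IsHermitian) (hCunit : ∀ k, C k * C k = 1) :
    ‖∑ k, (Γ k ⊗ₖ (B k ⊗ₖ (1 : Matrix (Fin D) (Fin D) ℂ)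
            + (1 : Matrix (Fin D) (Fin D) ℂ) ⊗ₖ C k)
          + (1 : Matrix (Fin d) (Fin d) ℂ) ⊗ₖ (B k ⊗ₖ C k))‖
      ≤ K + 2 * Real.sqrt K :=
  stmt10_general K d D hK7 Γ hherm hunit hanti B C hBherm hBunit hCherm hCunit
end

section
/- Let K ≥ 2, let Γ₁,…,Γ_K be d×d complex matrices that are Hermitian, unitary, and pairwise anticommuting, and let B₁,…,B_K, C₁,…,C_K be D×D Hermitian unitary matrices. Set b_k := Γₖ ⊗ Bₖ ⊗ I_D, c_k := Γₖ ⊗ I_D ⊗ Cₖ, Q := √K · I_{dD²} − ∑_{j=1}^K c_j, and α_K := ((3K−2)√K − K²)/(2K(K−1)). Then the following matrix identity holds: (K + 2√K)·I_{dD²} − ∑_{k=1}^K (b_k + c_k + b_k c_k) = ((K−√K)/(2K(K−1))) · ∑_{i=1}^K ( Q + (√K+1)(c_i − b_i) )² + α_K · Q². (For 2 ≤ K ≤ 7 one has α_K ≥ 0, so this is a sum-of-squares certificate of positivity.) -/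
open Matrix
open scoped Kronecker

/-- `b_k := Γₖ ⊗ Bₖ ⊗ I_D`. -/
noncomputable def bOp {K d D : ℕ} (Γ : Fin K → Matrix (Fin d) (Fin d) ℂ)
    (B : Fin K → Matrix (Fin D) (Fin D) ℂ) (k : Fin K) :
    Matrix (Fin d × (Fin D × Fin D)) (Fin d × (Fin D × Fin D)) ℂ :=
  Γ k ⊗ₖ (B k ⊗ₖ (1 : Matrix (Fin D) (Fin D) ℂ))

/-- `c_k := Γₖ ⊗ I_D ⊗ Cₖ`. -/
noncomputable def cOp {K d D : ℕ} (Γ : Fin K → Matrix (Fin d) (Fin d) ℂ)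
    (C : Fin K → Matrix (Fin D) (Fin D) ℂ) (k : Fin K) :
    Matrix (Fin d × (Fin D × Fin D)) (Fin d × (Fin D × Fin D)) ℂ :=
  Γ k ⊗ₖ ((1 : Matrix (Fin D) (Fin D) ℂ) ⊗ₖ C k)

/-- `Q := √K · I − ∑ⱼ c_j`. -/
noncomputable def QOp {K d D : ℕ} (Γ : Fin K → Matrix (Fin d) (Fin d) ℂ)
    (C : Fin K → Matrix (Fin D) (Fin D) ℂ) :
    Matrix (Fin d × (Fin D × Fin D)) (Fin d × (Fin D × Fin D)) ℂ :=
  Real.sqrt K • (1 : Matrix (Fin d × (Fin D × Fin D)) (Fin d × (Fin D × Fin D)) ℂ)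
    - ∑ j, cOp Γ C j


open Finset

private lemma sos_sq_add_smul {A : Type*} [Ring A] [Algebra ℂ A] (x y : A) (μ : ℂ) :
    (x + μ • y) ^ 2 = x * x + μ • (x * y) + μ • (y * x) + (μ ^ 2) • (y * y) := by
  simp only [pow_two, mul_add, add_mul, mul_smul_comm, smul_mul_assoc, smul_smul, smul_add]
  module

private lemma sos_key {A : Type*} [Ring A] [Algebra ℂ A] (K : ℕ) (hK : 2 ≤ K) (s : ℂ)
    (hs : s ^ 2 = (K : ℂ)) (b c : Fin K → A)
    (hb : ∀ i, b i * b i = 1) (hc : ∀ i, c i * c i = 1)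
    (hbc : ∀ i, b i * c i = c i * b i)
    (hanti : ∀ i j, i ≠ j → b i * c j + c j * b i = 0) :
    ((K : ℂ) + 2 * s) • (1 : A) - ∑ k, (b k + c k + b k * c k)
      = (((K : ℂ) - s) / (2 * K * (K - 1))) •
          ∑ i, ((s • (1:A) - ∑ j, c j) + (s + 1) • (c i - b i)) ^ 2
        + (((3 * K - 2) * s - (K:ℂ) ^ 2) / (2 * K * (K - 1))) • (s • (1:A) - ∑ j, c j) ^ 2 := by
  have hK0 : (K : ℂ) ≠ 0 := Nat.cast_ne_zero.mpr (by omega)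
  have hK1 : (K : ℂ) - 1 ≠ 0 := by
    intro h
    have h1 : (K : ℂ) = 1 := by linear_combination h
    have : K = 1 := by exact_mod_cast h1
    omega
  have hs0 : s ≠ 0 := by
    intro h; rw [h] at hs; simp at hs; exact hK0 hs.symm
  set S : A := ∑ j, c j with hS
  set Bb : A := ∑ j, b j with hBb
  set P : A := ∑ j, b j * c j with hP
  -- step A : S * b i + b i * S = 2 • (b i * c i)
  have stepA : ∀ i, S * b i + b i * S = (2 : ℂ) • (b i * c i) := by
    intro i
    rw [hS, Finset.sum_mul, Finset.mul_sum, ← Finset.sum_add_distrib,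
      Finset.sum_eq_single i]
    · rw [hbc i]; module
    · intro j _ hj
      have := hanti i j hj.symm
      linear_combination (norm := noncomm_ring) this
    · simp
  have SB : S * Bb + Bb * S = (2:ℂ) • P := by
    rw [hBb, Finset.mul_sum, Finset.sum_mul, ← Finset.sum_add_distrib, hP,
      Finset.smul_sum]
    exact Finset.sum_congr rfl fun i _ => stepA i
  have SS : ∀ i, S * c i + c i * S = S * c i + c i * S := fun _ => rfl
  -- squares of differences
  have hD2 : ∀ i, (c i - b i) * (c i - b i) = (2:ℂ) • (1:A) - (2:ℂ) • (b i * c i) := by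
    intro i
    rw [sub_mul, mul_sub, mul_sub, hb i, hc i, hbc i]
    module
  set Q : A := s • (1 : A) - S with hQ
  have Qsq : Q * Q = (K:ℂ) • (1:A) - (2*s) • S + S * S := by
    rw [hQ]
    simp only [sub_mul, mul_sub, smul_mul_assoc, mul_smul_comm, one_mul, mul_one]
    rw [← hs]
    module
  have cross : Q * (S - Bb) + (S - Bb) * Q
      = (2*s) • S - (2*s) • Bb - (2:ℂ) • (S * S) + (2:ℂ) • P := by
    rw [← SB, hQ]
    simp only [sub_mul, mul_sub, smul_mul_assoc, mul_smul_comm, one_mul, mul_one]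
    module
  have hdiff : ∑ i, (c i - b i) = S - Bb := by
    rw [Finset.sum_sub_distrib, hS, hBb]
  have hsq : ∑ i : Fin K, ((c i - b i) * (c i - b i))
      = ((K:ℂ) * 2) • (1:A) - (2:ℂ) • P := by
    rw [Finset.sum_congr rfl fun i _ => hD2 i, Finset.sum_sub_distrib,
      ← Finset.smul_sum, hP, Finset.sum_const, Finset.card_univ, Fintype.card_fin,
      ← Nat.cast_smul_eq_nsmul ℂ, smul_smul, mul_comm (2:ℂ) (K:ℂ)]
    rw [← Finset.smul_sum]
  have Tsum : ∑ i, (Q + (s + 1) • (c i - b i)) ^ 2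
      = (K:ℂ) • (Q * Q) + (s+1) • (Q * (S - Bb) + (S - Bb) * Q)
        + ((s+1)^2) • (((K:ℂ) * 2) • (1:A) - (2:ℂ) • P) := by
    have e1 : ∀ i ∈ Finset.univ, (Q + (s + 1) • (c i - b i)) ^ 2
        = Q * Q + (s+1) • (Q * (c i - b i)) + (s+1) • ((c i - b i) * Q)
          + ((s+1)^2) • ((c i - b i) * (c i - b i)) := fun i _ => sos_sq_add_smul _ _ _
    rw [Finset.sum_congr rfl e1]
    simp only [Finset.sum_add_distrib]
    rw [Finset.sum_const, Finset.card_univ, Fintype.card_fin,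
      ← Nat.cast_smul_eq_nsmul ℂ, ← Finset.smul_sum, ← Finset.smul_sum,
      ← Finset.smul_sum, ← Finset.mul_sum, ← Finset.sum_mul, hdiff, hsq]
    simp only [smul_add, smul_sub, smul_smul]
    module
  have LHSsum : ∑ k, (b k + c k + b k * c k) = Bb + S + P := by
    simp [Finset.sum_add_distrib, hS, hBb, hP]
  rw [LHSsum, Tsum, cross, pow_two Q, Qsq]
  have hKs : (K : ℂ) = s ^ 2 := hs.symm
  have hs1 : s ^ 2 - 1 ≠ 0 := by rw [← hKs]; exact hK1
  rw [hKs]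
  match_scalars <;> field_simp <;> ring

/-- The sum-of-squares identity: for a Clifford family `Γ₁, …, Γ_K`
(`K ≥ 2`) and `D × D` Hermitian unitaries `B₁,…,B_K`, `C₁,…,C_K`, setting
`b_k := Γₖ ⊗ Bₖ ⊗ I_D`, `c_k := Γₖ ⊗ I_D ⊗ Cₖ`, `Q := √K·I − ∑ⱼ c_j`, and
`α_K := ((3K−2)√K − K²)/(2K(K−1))`, one has
`(K + 2√K)·I − ∑ₖ (b_k + c_k + b_k c_k)
  = ((K−√K)/(2K(K−1))) ∑ᵢ (Q + (√K+1)(c_i − b_i))² + α_K Q²`.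
(For `2 ≤ K ≤ 7`, `α_K ≥ 0`, so this is a sum-of-squares certificate.) -/
theorem stmt11 (K d D : ℕ) (hK : 2 ≤ K)
    (Γ : Fin K → Matrix (Fin d) (Fin d) ℂ)
    (hherm : ∀ k, (Γ k).IsHermitian)
    (hunit : ∀ k, Γ k * Γ k = 1)
    (hanti : ∀ i j, i ≠ j → Γ i * Γ j + Γ j * Γ i = 0)
    (B C : Fin K → Matrix (Fin D) (Fin D) ℂ)
    (hBherm : ∀ k, (B k).IsHermitian) (hBunit : ∀ k, B k * B k = 1)
    (hCherm : ∀ k, (C k).IsHermitian) (hCunit : ∀ k, C k * C k = 1) :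
    ((K : ℝ) + 2 * Real.sqrt K) •
        (1 : Matrix (Fin d × (Fin D × Fin D)) (Fin d × (Fin D × Fin D)) ℂ)
      - ∑ k, (bOp Γ B k + cOp Γ C k + bOp Γ B k * cOp Γ C k)
    = ((K - Real.sqrt K) / (2 * K * (K - 1))) •
        ∑ i, (QOp Γ C + (Real.sqrt K + 1) • (cOp Γ C i - bOp Γ B i)) ^ 2
      + (((3 * K - 2) * Real.sqrt K - K ^ 2) / (2 * K * (K - 1))) • QOp Γ C ^ 2 := by
  classical
  have hb : ∀ k, bOp Γ B k * bOp Γ B k = 1 := by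
    intro k
    simp [bOp, ← Matrix.mul_kronecker_mul, hunit k, hBunit k, Matrix.one_kronecker_one]
  have hc : ∀ k, cOp Γ C k * cOp Γ C k = 1 := by
    intro k
    simp [cOp, ← Matrix.mul_kronecker_mul, hunit k, hCunit k, Matrix.one_kronecker_one]
  have hbc : ∀ k, bOp Γ B k * cOp Γ C k = cOp Γ C k * bOp Γ B k := by
    intro k
    simp [bOp, cOp, ← Matrix.mul_kronecker_mul, hunit k]
  have hanti' : ∀ i j, i ≠ j → bOp Γ B i * cOp Γ C j + cOp Γ C j * bOp Γ B i = 0 := by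
    intro i j hij
    simp only [bOp, cOp, ← Matrix.mul_kronecker_mul, one_mul, mul_one]
    rw [← Matrix.add_kronecker, hanti i j hij, Matrix.zero_kronecker]
  have hs : ((Real.sqrt K : ℝ) : ℂ) ^ 2 = (K : ℂ) := by
    have h : (Real.sqrt K) ^ 2 = (K : ℝ) := Real.sq_sqrt (by positivity)
    rw [← Complex.ofReal_pow, h, Complex.ofReal_natCast]
  have hsmul : ∀ (r : ℝ) (M : Matrix (Fin d × (Fin D × Fin D)) (Fin d × (Fin D × Fin D)) ℂ),
      r • M = ((r : ℂ)) • M := by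
    intro r M
    rw [← algebraMap_smul ℂ r M, Complex.coe_algebraMap]
  have main := sos_key K hK ((Real.sqrt K : ℝ) : ℂ) hs (bOp Γ B) (cOp Γ C) hb hc hbc hanti'
  simp only [QOp, hsmul]
  push_cast
  convert main using 2
end

section
/- Let K ≥ 2 and g₁, g₂, g₃ ∈ ℝ. Define the (1+2K)×(1+2K) real symmetric matrix G(g₁,g₂,g₃) = [[1, g₁𝟙_Kᵀ, g₁𝟙_Kᵀ],[g₁𝟙_K, I_K + g₂(J_K − I_K), g₃ I_K],[g₁𝟙_K, g₃ I_K, I_K + g₂(J_K − I_K)]]. Then G(g₁,g₂,g₃) is positive semidefinite if and only if the following four inequalities hold: 1 + (K−1)g₂ − g₃ ≥ 0, 1 − g₂ + g₃ ≥ 0, 1 − g₂ − g₃ ≥ 0, and 1 + (K−1)g₂ + g₃ ≥ 2K g₁². -/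
open Matrix

/-- The `K × K` all-ones matrix. -/
def allOnes (K : ℕ) : Matrix (Fin K) (Fin K) ℝ := Matrix.of fun _ _ => 1

/-- The symmetry-reduced level-1 NPA Gram matrix
`G(g₁,g₂,g₃) = [[1, g₁𝟙ᵀ, g₁𝟙ᵀ],[g₁𝟙, I + g₂(J−I), g₃I],[g₁𝟙, g₃I, I + g₂(J−I)]]`. -/
def npaGram (K : ℕ) (g₁ g₂ g₃ : ℝ) :
    Matrix (Unit ⊕ (Fin K ⊕ Fin K)) (Unit ⊕ (Fin K ⊕ Fin K)) ℝ :=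
  Matrix.fromBlocks
    (Matrix.of fun _ _ => 1)
    (Matrix.of fun _ _ => g₁)
    (Matrix.of fun _ _ => g₁)
    (Matrix.fromBlocks
      (1 + g₂ • (allOnes K - 1)) (g₃ • (1 : Matrix (Fin K) (Fin K) ℝ))
      (g₃ • (1 : Matrix (Fin K) (Fin K) ℝ)) (1 + g₂ • (allOnes K - 1)))

/-! Write a vector as `(t, u, v)` and put `S = ∑ u + ∑ v`, `D = ∑ u - ∑ v`. With
`c₁, c₂, c₃, c₄ = 1 + (K-1)g₂ - g₃, 1 - g₂ + g₃, 1 - g₂ - g₃, 1 + (K-1)g₂ + g₃`, the quadratic form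
of `G` at `(t, u, v)`, multiplied by `2K`, equals

`2K (t + g₁ S)² + (c₄ - 2K g₁²) S² + c₁ D² + c₃ (K ‖u - v‖² - D²) + c₂ (K ‖u + v‖² - S²)`,

and both brackets are nonnegative by Cauchy–Schwarz against the all-ones vector. Conversely, the
test vectors `(0, 𝟙, -𝟙)`, `(0, e, ±e)` with `e = δ₀ - δ₁`, and `(-2K g₁, 𝟙, 𝟙)` isolate the four
inequalities. -/

lemma allOnes_mulVec (K : ℕ) (u : Fin K → ℝ) : allOnes K *ᵥ u = fun _ => ∑ i, u i := by
  ext; simp [allOnes, mulVec, dotProduct]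

lemma npaGram_isHermitian (K : ℕ) (g₁ g₂ g₃ : ℝ) : (npaGram K g₁ g₂ g₃).IsHermitian := by
  ext (_ | _ | i) (_ | _ | j) <;> simp [npaGram, allOnes, one_apply, eq_comm]

lemma dotProduct_npaGram_mulVec (K : ℕ) (g₁ g₂ g₃ t : ℝ) (u v : Fin K → ℝ) :
    Sum.elim (fun _ => t) (Sum.elim u v) ⬝ᵥ
        (npaGram K g₁ g₂ g₃ *ᵥ Sum.elim (fun _ => t) (Sum.elim u v)) =
      t ^ 2 + 2 * g₁ * t * (∑ i, u i + ∑ i, v i) + (1 - g₂) * (u ⬝ᵥ u + v ⬝ᵥ v) +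
        g₂ * ((∑ i, u i) ^ 2 + (∑ i, v i) ^ 2) + 2 * g₃ * (u ⬝ᵥ v) := by
  simp only [npaGram, fromBlocks_mulVec, Sum.elim_comp_inl, Sum.elim_comp_inr,
    sumElim_dotProduct_sumElim, add_mulVec, smul_mulVec, sub_mulVec, one_mulVec, allOnes_mulVec,
    dotProduct_add, dotProduct_smul, dotProduct_sub]
  simp only [dotProduct, mulVec, of_apply, one_mul, Fintype.sum_sum_type, Sum.elim_inl,
    Sum.elim_inr, Finset.univ_unique, Finset.sum_singleton, ← Finset.mul_sum, ← Finset.sum_mul,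
    mul_comm (v _) (u _)]
  ring

lemma sq_sum_le_card_mul_dotProduct_self {n : Type*} [Fintype n] (f : n → ℝ) :
    (∑ i, f i) ^ 2 ≤ Fintype.card n * (f ⬝ᵥ f) := by
  simpa [dotProduct, sq] using sq_sum_le_card_mul_sum_sq (s := Finset.univ) (f := f)

lemma quadratic_nonneg_of_variance_bounds {K t a b p q w g₁ g₂ g₃ : ℝ} (hK : 0 < K)
    (hsub : (a - b) ^ 2 ≤ K * (p + q - 2 * w)) (hadd : (a + b) ^ 2 ≤ K * (p + q + 2 * w))
    (h₁ : 0 ≤ 1 + (K - 1) * g₂ - g₃) (h₂ : 0 ≤ 1 - g₂ + g₃) (h₃ : 0 ≤ 1 - g₂ - g₃)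
    (h₄ : 2 * K * g₁ ^ 2 ≤ 1 + (K - 1) * g₂ + g₃) :
    0 ≤ t ^ 2 + 2 * g₁ * t * (a + b) + (1 - g₂) * (p + q) + g₂ * (a ^ 2 + b ^ 2) + 2 * g₃ * w := by
  have sos : 2 * K * (t ^ 2 + 2 * g₁ * t * (a + b) + (1 - g₂) * (p + q) + g₂ * (a ^ 2 + b ^ 2) +
        2 * g₃ * w) =
      2 * K * (t + g₁ * (a + b)) ^ 2 + (1 + (K - 1) * g₂ + g₃ - 2 * K * g₁ ^ 2) * (a + b) ^ 2 +
        (1 + (K - 1) * g₂ - g₃) * (a - b) ^ 2 + (1 - g₂ - g₃) * (K * (p + q - 2 * w) - (a - b) ^ 2) +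
        (1 - g₂ + g₃) * (K * (p + q + 2 * w) - (a + b) ^ 2) := by
    ring
  refine nonneg_of_mul_nonneg_right ?_ (by positivity : 0 < 2 * K)
  rw [sos]
  exact add_nonneg (add_nonneg (add_nonneg (add_nonneg (by positivity)
    (mul_nonneg (sub_nonneg.2 h₄) (sq_nonneg _))) (mul_nonneg h₁ (sq_nonneg _)))
    (mul_nonneg h₃ (sub_nonneg.2 hsub))) (mul_nonneg h₂ (sub_nonneg.2 hadd))

lemma npaGram_posSemidef_of_le {K : ℕ} (hK : 0 < K) {g₁ g₂ g₃ : ℝ}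
    (h₁ : 0 ≤ 1 + (K - 1) * g₂ - g₃) (h₂ : 0 ≤ 1 - g₂ + g₃) (h₃ : 0 ≤ 1 - g₂ - g₃)
    (h₄ : 2 * K * g₁ ^ 2 ≤ 1 + (K - 1) * g₂ + g₃) : (npaGram K g₁ g₂ g₃).PosSemidef := by
  refine .of_dotProduct_mulVec_nonneg (npaGram_isHermitian K g₁ g₂ g₃) fun x => ?_
  obtain ⟨t, u, v, rfl⟩ : ∃ t u v, x = Sum.elim (fun _ => t) (Sum.elim u v) :=
    ⟨x (.inl ()), x ∘ .inr ∘ .inl, x ∘ .inr ∘ .inr, by ext (_ | _ | _) <;> rfl⟩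
  have hsub := sq_sum_le_card_mul_dotProduct_self (u - v)
  have hadd := sq_sum_le_card_mul_dotProduct_self (u + v)
  simp only [Pi.sub_apply, Pi.add_apply, Finset.sum_sub_distrib, Finset.sum_add_distrib,
    sub_dotProduct, dotProduct_sub, add_dotProduct, dotProduct_add, dotProduct_comm v u,
    Fintype.card_fin] at hsub hadd
  rw [star_trivial, dotProduct_npaGram_mulVec]
  exact quadratic_nonneg_of_variance_bounds (by exact_mod_cast hK) (by linarith) (by linarith)
    h₁ h₂ h₃ h₄

lemma le_of_npaGram_posSemidef {K : ℕ} (hK : 2 ≤ K) {g₁ g₂ g₃ : ℝ}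
    (hG : (npaGram K g₁ g₂ g₃).PosSemidef) :
    0 ≤ 1 + (K - 1) * g₂ - g₃ ∧ 0 ≤ 1 - g₂ + g₃ ∧ 0 ≤ 1 - g₂ - g₃ ∧
      2 * K * g₁ ^ 2 ≤ 1 + (K - 1) * g₂ + g₃ := by
  have hQ (t : ℝ) (u v : Fin K → ℝ) :
      0 ≤ t ^ 2 + 2 * g₁ * t * (∑ i, u i + ∑ i, v i) + (1 - g₂) * (u ⬝ᵥ u + v ⬝ᵥ v) +
        g₂ * ((∑ i, u i) ^ 2 + (∑ i, v i) ^ 2) + 2 * g₃ * (u ⬝ᵥ v) := by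
    simpa [dotProduct_npaGram_mulVec] using
      hG.dotProduct_mulVec_nonneg (Sum.elim (fun _ => t) (Sum.elim u v))
  let e : Fin K → ℝ := Pi.single ⟨0, by omega⟩ 1 - Pi.single ⟨1, by omega⟩ 1
  have he_sum : ∑ i, e i = 0 := by simp [e, Finset.sum_sub_distrib]
  have he_dot : e ⬝ᵥ e = 2 := by simp [e]; norm_num
  have h_one_neg := hQ 0 1 (-1)
  have h_e_e := hQ 0 e e
  have h_e_neg := hQ 0 e (-e)
  have h_one_one := hQ (-2 * K * g₁) 1 1
  simp [he_sum, he_dot] at h_one_neg h_e_e h_e_neg h_one_one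
  have hK₀ : (0 : ℝ) < 2 * K := by positivity
  refine ⟨?_, by linarith, by linarith, ?_⟩
  · exact nonneg_of_mul_nonneg_right (by linarith) hK₀
  · exact sub_nonneg.1 (nonneg_of_mul_nonneg_right (by linarith) hK₀)

/-- For `K ≥ 2`, the Gram matrix `G(g₁,g₂,g₃)` is positive
semidefinite iff `1 + (K−1)g₂ − g₃ ≥ 0`, `1 − g₂ + g₃ ≥ 0`, `1 − g₂ − g₃ ≥ 0`, and
`1 + (K−1)g₂ + g₃ ≥ 2K g₁²`. -/
theorem stmt16 (K : ℕ) (hK : 2 ≤ K) (g₁ g₂ g₃ : ℝ) :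
    (npaGram K g₁ g₂ g₃).PosSemidef ↔
      (0 ≤ 1 + (K - 1) * g₂ - g₃ ∧ 0 ≤ 1 - g₂ + g₃ ∧ 0 ≤ 1 - g₂ - g₃ ∧
        2 * K * g₁ ^ 2 ≤ 1 + (K - 1) * g₂ + g₃) :=
  ⟨le_of_npaGram_posSemidef hK, fun ⟨h₁, h₂, h₃, h₄⟩ ↦
    npaGram_posSemidef_of_le (by omega) h₁ h₂ h₃ h₄⟩
end
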